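/- Let Θ be a standard Borel measurable space, θ ↦ P_θ a Markov kernel from Θ to a standard Borel measurable space Ω, w a probability measure on Θ, and P_w = ∫ P_θ w(dθ) the mixture measure on Ω. Then the mixture minimizes the average Kullback–Leibler divergence: for every probability measure Q on Ω, ∫ D(P_θ‖P_w) w(dθ) ≤ ∫ D(P_θ‖Q) w(dθ), where the integrals take values in the extended nonnegative reals. -/

import Mathlib

open MeasureTheory ProbabilityTheory ENNReal
open scoped Classical

/-- Kullback–Leibler divergence `D(P‖Q) = ∫ log (dP/dQ) dP`, with value `+∞` when
`P` is not absolutely continuous w.r.t. `Q` or the integral is infinite. -/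
noncomputable def klDiv {Ω : Type*} [MeasurableSpace Ω] (P Q : Measure Ω) : ℝ≥0∞ :=
  if P ≪ Q ∧ Integrable (llr P Q) P then ENNReal.ofReal (∫ x, llr P Q x ∂P) else ⊤

lemma aux_mul_neg_log_le {t : ℝ} (ht : 0 ≤ t) : t * (-Real.log t) ≤ Real.exp (-1) := by
  rcases eq_or_lt_of_le ht with h | h
  · simp [← h]; positivity
  · rcases le_or_gt 1 t with h1 | h1
    · have : Real.log t ≥ 0 := Real.log_nonneg h1
      nlinarith [Real.exp_pos (-1 : ℝ)]
    · have hx : (0:ℝ) < Real.exp (-1) / t := by positivity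
      have := Real.log_le_sub_one_of_pos hx
      rw [Real.log_div (Real.exp_ne_zero _) (ne_of_gt h), Real.log_exp] at this
      have h2 : -Real.log t ≤ Real.exp (-1) / t := by linarith
      calc t * (-Real.log t) ≤ t * (Real.exp (-1) / t) := mul_le_mul_of_nonneg_left h2 ht
        _ = Real.exp (-1) := by field_simp

lemma aux_ofReal_max_zero (a : ℝ) : ENNReal.ofReal (max a 0) = ENNReal.ofReal a := by
  rcases le_total a 0 with h | h
  · simp [max_eq_right h, ENNReal.ofReal_eq_zero.mpr h]
  · simp [max_eq_left h]

lemma aux_max_sub (a : ℝ) : max a 0 - max (-a) 0 = a := by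
  rcases le_total a 0 with h | h
  · simp [max_eq_right h, max_eq_left (neg_nonneg.mpr h)]
  · simp [max_eq_left h, max_eq_right (neg_nonpos.mpr h)]

lemma aux_abs_le (u l : ℝ) : |u - l| ≤ |u| + max (-l) 0 + max (l - u) 0 := by
  rcases le_total (u - l) 0 with h | h
  · rw [abs_of_nonpos h]
    have h1 : -(u - l) = l - u := by ring
    have h2 : l - u ≤ max (l - u) 0 := le_max_left _ _
    have h3 : (0:ℝ) ≤ |u| := abs_nonneg u
    have h4 : (0:ℝ) ≤ max (-l) 0 := le_max_right _ _
    linarith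
  · rw [abs_of_nonneg h]
    have h1 : u ≤ |u| := le_abs_self u
    have h2 : -l ≤ max (-l) 0 := le_max_left _ _
    have h3 : (0:ℝ) ≤ max (l - u) 0 := le_max_right _ _
    linarith

/-- The negative part of the log-likelihood ratio has `μ`-lintegral at most `e⁻¹`. -/
lemma lintegral_ofReal_neg_llr_le {Ω : Type*} [MeasurableSpace Ω] {μ ν : Measure Ω}
    [IsFiniteMeasure μ] [IsProbabilityMeasure ν] (hμν : μ ≪ ν) :
    ∫⁻ x, ENNReal.ofReal (- llr μ ν x) ∂μ ≤ ENNReal.ofReal (Real.exp (-1)) := by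
  have hmeas : AEMeasurable (fun x => ENNReal.ofReal (- llr μ ν x)) ν :=
    ((measurable_llr μ ν).neg.ennreal_ofReal).aemeasurable
  rw [← MeasureTheory.lintegral_rnDeriv_mul hμν hmeas]
  calc ∫⁻ x, μ.rnDeriv ν x * ENNReal.ofReal (- llr μ ν x) ∂ν
      ≤ ∫⁻ _, ENNReal.ofReal (Real.exp (-1)) ∂ν := by
        refine lintegral_mono_ae ?_
        filter_upwards [Measure.rnDeriv_lt_top μ ν] with x hx
        set t := (μ.rnDeriv ν x).toReal with htdef
        have hμx : μ.rnDeriv ν x = ENNReal.ofReal t := by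
          rw [htdef, ENNReal.ofReal_toReal hx.ne]
        rw [hμx, llr, ← ENNReal.ofReal_mul ENNReal.toReal_nonneg]
        exact ENNReal.ofReal_le_ofReal (aux_mul_neg_log_le ENNReal.toReal_nonneg)
    _ = ENNReal.ofReal (Real.exp (-1)) := by simp

/-- Gibbs' inequality. -/
lemma integral_llr_nonneg' {Ω : Type*} [MeasurableSpace Ω] {μ ν : Measure Ω}
    [IsProbabilityMeasure μ] [IsProbabilityMeasure ν] (hμν : μ ≪ ν)
    (h_int : Integrable (llr μ ν) μ) : 0 ≤ ∫ x, llr μ ν x ∂μ := by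
  have h_int2 : Integrable (fun x => (ν.rnDeriv μ x).toReal) μ :=
    Measure.integrable_toReal_rnDeriv
  have h_le : ∀ᵐ x ∂μ, 1 - (ν.rnDeriv μ x).toReal ≤ llr μ ν x := by
    filter_upwards [Measure.rnDeriv_pos hμν, hμν.ae_le (Measure.rnDeriv_lt_top μ ν),
      Measure.inv_rnDeriv hμν] with x h0 hlt hinv
    have ht : 0 < (μ.rnDeriv ν x).toReal := ENNReal.toReal_pos h0.ne' hlt.ne
    have hinv' : (ν.rnDeriv μ x).toReal = ((μ.rnDeriv ν x).toReal)⁻¹ := by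
      rw [← hinv]; simp [ENNReal.toReal_inv]
    have hlog := Real.log_le_sub_one_of_pos (inv_pos.mpr ht)
    rw [Real.log_inv] at hlog
    rw [llr, hinv']
    linarith
  have hfint : Integrable (fun x => 1 - (ν.rnDeriv μ x).toReal) μ :=
    (integrable_const (1:ℝ)).sub h_int2
  have hmono := integral_mono_ae hfint h_int h_le
  have heq : ∫ x, (1 - (ν.rnDeriv μ x).toReal) ∂μ
      = 1 - ∫ x, (ν.rnDeriv μ x).toReal ∂μ := by
    rw [integral_sub (integrable_const (1:ℝ)) h_int2]
    simp
  have h2 : ∫ x, (ν.rnDeriv μ x).toReal ∂μ ≤ 1 := by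
    have := Measure.setIntegral_toReal_rnDeriv_le (μ := ν) (ν := μ) (s := Set.univ)
      (by simp : ν Set.univ ≠ ⊤)
    simpa using this
  rw [heq] at hmono
  linarith

/-- **The mixture minimizes average KL divergence.** For a Markov kernel `P` and a prior
`w` with mixture `P_w = ∫ P_θ w(dθ)`, for every probability measure `Q`,
`∫ D(P_θ‖P_w) w(dθ) ≤ ∫ D(P_θ‖Q) w(dθ)`. -/
theorem mixture_minimizes_avg_klDiv
    {Θ Ω : Type*} [MeasurableSpace Θ] [StandardBorelSpace Θ]
    [MeasurableSpace Ω] [StandardBorelSpace Ω]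
    (P : Kernel Θ Ω) [IsMarkovKernel P]
    (w : Measure Θ) [IsProbabilityMeasure w]
    (Q : Measure Ω) [IsProbabilityMeasure Q] :
    ∫⁻ θ, klDiv (P θ) (w.bind (fun θ => P θ)) ∂w ≤ ∫⁻ θ, klDiv (P θ) Q ∂w := by
  set M : Measure Ω := w.bind (fun θ => P θ) with hMdef
  have hPmeas : Measurable (fun θ => P θ) := P.measurable
  have hMapp : ∀ {s : Set Ω}, MeasurableSet s → M s = ∫⁻ θ, P θ s ∂w :=
    fun hs => Measure.bind_apply hs hPmeas.aemeasurable
  have hMprob : IsProbabilityMeasure M := by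
    constructor
    rw [hMapp MeasurableSet.univ]
    simp
  -- jointly measurable version of `llr (P θ) Q`
  set r : Θ → Ω → ℝ := fun θ x => Real.log (Kernel.rnDeriv P (Kernel.const Θ Q) θ x).toReal
    with hrdef
  have hr_meas : StronglyMeasurable (Function.uncurry r) :=
    ((Kernel.measurable_rnDeriv P (Kernel.const Θ Q)).ennreal_toReal.log).stronglyMeasurable
  have hr_ae : ∀ θ, P θ ≪ Q → r θ =ᵐ[P θ] llr (P θ) Q := by
    intro θ hac
    refine hac.ae_le ?_
    have h := Kernel.rnDeriv_eq_rnDeriv_measure (κ := P) (η := Kernel.const Θ Q) (a := θ)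
    rw [Kernel.const_apply] at h
    filter_upwards [h] with x hx
    rw [hrdef]
    simp only [llr, hx]
  -- the good set
  set G : Set Θ := {θ | P θ ≪ Q} ∩ {θ | Integrable (r θ) (P θ)} with hGdef
  have hG_meas : MeasurableSet G := by
    refine MeasurableSet.inter ?_ ?_
    · have := Kernel.measurableSet_absolutelyContinuous P (Kernel.const Θ Q)
      simpa [Kernel.const_apply] using this
    · exact ProbabilityTheory.measurableSet_kernel_integrable hr_meas
  have hG_klDiv : ∀ θ, θ ∉ G → klDiv (P θ) Q = ⊤ := by
    intro θ hθ
    rw [klDiv, if_neg]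
    intro ⟨hac, hint⟩
    exact hθ ⟨hac, hint.congr (hr_ae θ hac).symm⟩
  by_cases hae : ∀ᵐ θ ∂w, θ ∈ G
  swap
  · -- RHS is infinite
    have hGc : w Gᶜ ≠ 0 := by
      rw [ae_iff] at hae
      exact hae
    have h1 : ∫⁻ θ in Gᶜ, klDiv (P θ) Q ∂w = ⊤ := by
      rw [setLIntegral_congr_fun hG_meas.compl
        (fun θ (hθ : θ ∉ G) => hG_klDiv θ hθ)]
      simp [ENNReal.top_mul hGc]
    have h2 : ∫⁻ θ, klDiv (P θ) Q ∂w = ⊤ :=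
      eq_top_iff.mpr (h1 ▸ setLIntegral_le_lintegral _ _)
    rw [h2]
    exact le_top
  by_cases hRtop : ∫⁻ θ, klDiv (P θ) Q ∂w = ⊤
  · rw [hRtop]; exact le_top
  -- From here on, a.e. θ is good and the RHS is finite.
  have hQae : ∀ᵐ θ ∂w, P θ ≪ Q ∧ Integrable (llr (P θ) Q) (P θ) := by
    filter_upwards [hae] with θ hθ
    exact ⟨hθ.1, hθ.2.congr (hr_ae θ hθ.1)⟩
  have hMQ : M ≪ Q := by
    refine Measure.AbsolutelyContinuous.mk (fun s hs hQs => ?_)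
    rw [hMapp hs]
    rw [lintegral_congr_ae (g := fun _ => 0)]
    · simp
    · filter_upwards [hQae] with θ hθ
      exact hθ.1 hQs
  -- the mixture density
  set g : Ω → ℝ≥0∞ := M.rnDeriv Q with hgdef
  have hg_meas : Measurable g := Measure.measurable_rnDeriv M Q
  set Z : Set Ω := {x | g x = 0} with hZdef
  have hZ_meas : MeasurableSet Z := hg_meas (measurableSet_singleton 0)
  have hMZ : M Z = 0 := by
    conv_lhs => rw [← Measure.withDensity_rnDeriv_eq M Q hMQ]
    rw [withDensity_apply _ hZ_meas]
    rw [setLIntegral_congr_fun hZ_meas (fun x (hx : g x = 0) => hx)]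
    simp
  have hZae : ∀ᵐ θ ∂w, P θ Z = 0 := by
    have h0 : ∫⁻ θ, P θ Z ∂w = 0 := by rw [← hMapp hZ_meas]; exact hMZ
    rw [lintegral_eq_zero_iff (P.measurable_coe hZ_meas)] at h0
    exact h0
  have hPM : ∀ᵐ θ ∂w, P θ ≪ M := by
    filter_upwards [hQae, hZae] with θ hθ hZθ
    refine Measure.AbsolutelyContinuous.mk (fun s hs hMs => ?_)
    have hQs : Q (s ∩ Zᶜ) = 0 := by
      have : ∫⁻ x in s, g x ∂Q = 0 := by
        rw [← withDensity_apply _ hs, Measure.withDensity_rnDeriv_eq M Q hMQ]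
        exact hMs
      rw [lintegral_eq_zero_iff' (hg_meas.aemeasurable.restrict)] at this
      have h' : (Q.restrict s) {x | g x ≠ 0} = 0 := by
        have h'2 := ae_iff.mp this
        simpa using h'2
      rw [Measure.restrict_apply (by exact hZ_meas.compl : MeasurableSet {x | g x ≠ 0})] at h'
      rw [Set.inter_comm]
      exact h'
    have h1 : P θ (s ∩ Zᶜ) = 0 := hθ.1 hQs
    have h2 : P θ (s ∩ Z) = 0 :=
      measure_mono_null Set.inter_subset_right hZθ
    refine le_antisymm ?_ zero_le
    calc P θ s ≤ P θ ((s ∩ Zᶜ) ∪ (s ∩ Z)) := by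
          refine measure_mono (fun x hx => ?_)
          by_cases h : x ∈ Z
          · exact Or.inr ⟨hx, h⟩
          · exact Or.inl ⟨hx, h⟩
      _ ≤ P θ (s ∩ Zᶜ) + P θ (s ∩ Z) := measure_union_le _ _
      _ = 0 := by rw [h1, h2, add_zero]
  -- chain rule for llr
  have hchain : ∀ᵐ θ ∂w, P θ ≪ M → (P θ) Z = 0 →
      llr (P θ) Q =ᵐ[P θ] fun x => llr (P θ) M x + llr M Q x := by
    filter_upwards [hQae] with θ hθ hPMθ hZθ
    have hmul := Measure.rnDeriv_mul_rnDeriv (κ := Q) hPMθ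
    have hnmem : ∀ᵐ x ∂(P θ), x ∉ Z := by
      rw [← measure_eq_zero_iff_ae_notMem]
      exact hZθ
    filter_upwards [hθ.1.ae_le hmul, Measure.rnDeriv_pos hPMθ,
      hPMθ.ae_le (Measure.rnDeriv_lt_top (P θ) M), hθ.1.ae_le (Measure.rnDeriv_lt_top M Q),
      hnmem] with x hx hpos hlt hglt hgz
    have ha0 : ((P θ).rnDeriv M x).toReal ≠ 0 :=
      (ENNReal.toReal_pos hpos.ne' hlt.ne).ne'
    have hg0 : (M.rnDeriv Q x).toReal ≠ 0 := by
      refine (ENNReal.toReal_pos ?_ hglt.ne).ne'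
      simpa [hZdef, hgdef] using hgz
    rw [llr, llr, llr, ← hx]
    simp only [Pi.mul_apply]
    rw [ENNReal.toReal_mul, Real.log_mul ha0 hg0]
  -- finiteness of the negative part of llr M Q, θ-wise
  have hℓnegM : ∫⁻ x, ENNReal.ofReal (- llr M Q x) ∂M ≤ ENNReal.ofReal (Real.exp (-1)) :=
    lintegral_ofReal_neg_llr_le hMQ
  have hℓmeas : Measurable (llr M Q) := measurable_llr M Q
  have hbindℓ : ∫⁻ x, ENNReal.ofReal (- llr M Q x) ∂M
      = ∫⁻ θ, ∫⁻ x, ENNReal.ofReal (- llr M Q x) ∂(P θ) ∂w := by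
    rw [hMdef]
    exact Measure.lintegral_bind hPmeas.aemeasurable hℓmeas.neg.ennreal_ofReal.aemeasurable
  have hfinℓ : ∀ᵐ θ ∂w, ∫⁻ x, ENNReal.ofReal (- llr M Q x) ∂(P θ) < ⊤ := by
    refine ae_lt_top ?_ ?_
    · exact Measurable.lintegral_kernel_prod_right
        ((hℓmeas.neg.ennreal_ofReal).comp measurable_snd)
    · rw [← hbindℓ]
      exact ((hℓnegM.trans_lt ENNReal.ofReal_lt_top).ne)
  -- integrability of llr (P θ) M and llr M Q w.r.t. P θ, for a.e. θ
  have hint : ∀ᵐ θ ∂w, Integrable (llr (P θ) M) (P θ) ∧ Integrable (llr M Q) (P θ) := by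
    filter_upwards [hQae, hPM, hchain, hfinℓ, hZae] with θ hθ hPMθ hch hfin hZθ
    have hch' := hch hPMθ hZθ
    have hm_meas : AEStronglyMeasurable (llr (P θ) M) (P θ) :=
      (measurable_llr _ _).aestronglyMeasurable
    have hmneg : ∫⁻ x, ENNReal.ofReal (- llr (P θ) M x) ∂(P θ)
        ≤ ENNReal.ofReal (Real.exp (-1)) := lintegral_ofReal_neg_llr_le hPMθ
    have key : Integrable (llr (P θ) M) (P θ) := by
      refine ⟨hm_meas, ?_⟩
      rw [hasFiniteIntegral_iff_norm]
      have hptwise : ∀ᵐ x ∂(P θ),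
          ENNReal.ofReal ‖llr (P θ) M x‖
            ≤ ENNReal.ofReal ‖llr (P θ) Q x‖ + ENNReal.ofReal (- llr M Q x)
              + ENNReal.ofReal (- llr (P θ) M x) := by
        filter_upwards [hch'] with x hx
        have habs : |llr (P θ) M x|
            ≤ |llr (P θ) Q x| + max (- llr M Q x) 0 + max (- llr (P θ) M x) 0 := by
          have hux : llr (P θ) M x = llr (P θ) Q x - llr M Q x := by
            rw [hx]; ring
          have hmm : - llr (P θ) M x = llr M Q x - llr (P θ) Q x := by
            rw [hux]; ring
          calc |llr (P θ) M x| = |llr (P θ) Q x - llr M Q x| := by rw [hux]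
            _ ≤ |llr (P θ) Q x| + max (- llr M Q x) 0
                + max (llr M Q x - llr (P θ) Q x) 0 :=
                aux_abs_le (llr (P θ) Q x) (llr M Q x)
            _ = |llr (P θ) Q x| + max (- llr M Q x) 0 + max (- llr (P θ) M x) 0 := by
                rw [← hmm]
        calc ENNReal.ofReal ‖llr (P θ) M x‖
            ≤ ENNReal.ofReal (|llr (P θ) Q x| + max (- llr M Q x) 0
                + max (- llr (P θ) M x) 0) := by
              rw [Real.norm_eq_abs]
              exact ENNReal.ofReal_le_ofReal habs
          _ ≤ ENNReal.ofReal ‖llr (P θ) Q x‖ + ENNReal.ofReal (- llr M Q x)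
              + ENNReal.ofReal (- llr (P θ) M x) := by
              rw [Real.norm_eq_abs]
              refine le_trans (ENNReal.ofReal_add_le) ?_
              refine add_le_add (le_trans (ENNReal.ofReal_add_le) ?_) ?_
              · exact add_le_add le_rfl (le_of_eq (aux_ofReal_max_zero _))
              · exact le_of_eq (aux_ofReal_max_zero _)
      calc ∫⁻ x, ENNReal.ofReal ‖llr (P θ) M x‖ ∂(P θ)
          ≤ ∫⁻ x, (ENNReal.ofReal ‖llr (P θ) Q x‖ + ENNReal.ofReal (- llr M Q x)
              + ENNReal.ofReal (- llr (P θ) M x)) ∂(P θ) := lintegral_mono_ae hptwise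
        _ = ∫⁻ x, ENNReal.ofReal ‖llr (P θ) Q x‖ ∂(P θ)
            + ∫⁻ x, ENNReal.ofReal (- llr M Q x) ∂(P θ)
            + ∫⁻ x, ENNReal.ofReal (- llr (P θ) M x) ∂(P θ) := by
            rw [lintegral_add_right (g := fun x => ENNReal.ofReal (- llr (P θ) M x)) _ (measurable_llr _ _).neg.ennreal_ofReal,
              lintegral_add_right (g := fun x => ENNReal.ofReal (- llr M Q x)) _ hℓmeas.neg.ennreal_ofReal]
        _ < ⊤ := by
            refine ENNReal.add_lt_top.mpr ⟨ENNReal.add_lt_top.mpr ⟨?_, hfin⟩, ?_⟩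
            · rw [← hasFiniteIntegral_iff_norm]
              exact hθ.2.2
            · exact hmneg.trans_lt ENNReal.ofReal_lt_top
    refine ⟨key, ?_⟩
    have : Integrable (fun x => llr (P θ) Q x - llr (P θ) M x) (P θ) := hθ.2.sub key
    refine this.congr ?_
    filter_upwards [hch'] with x hx
    rw [hx]; ring
  -- the averaged quantities
  set ℓ : Ω → ℝ := llr M Q with hℓdef
  set A : Θ → ℝ := fun θ => ∫ x, r θ x ∂(P θ) with hAdef
  set Cf : Θ → ℝ := fun θ => ∫ x, ℓ x ∂(P θ) with hCfdef
  set Cp : Θ → ℝ := fun θ => ∫ x, max (ℓ x) 0 ∂(P θ) with hCpdef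
  set Cn : Θ → ℝ := fun θ => ∫ x, max (- ℓ x) 0 ∂(P θ) with hCndef
  have hA_meas : StronglyMeasurable A := hr_meas.integral_kernel_prod_right'
  have hCf_meas : StronglyMeasurable Cf := by
    have : StronglyMeasurable (Function.uncurry fun (_ : Θ) (x : Ω) => ℓ x) :=
      (hℓmeas.comp measurable_snd).stronglyMeasurable
    exact this.integral_kernel_prod_right'
  have hCp_meas : StronglyMeasurable Cp := by
    have : StronglyMeasurable (Function.uncurry fun (_ : Θ) (x : Ω) => max (ℓ x) 0) :=
      ((hℓmeas.max measurable_const).comp measurable_snd).stronglyMeasurable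
    exact this.integral_kernel_prod_right'
  have hCn_meas : StronglyMeasurable Cn := by
    have : StronglyMeasurable (Function.uncurry fun (_ : Θ) (x : Ω) => max (- ℓ x) 0) :=
      ((hℓmeas.neg.max measurable_const).comp measurable_snd).stronglyMeasurable
    exact this.integral_kernel_prod_right'
  have hCp_nonneg : ∀ θ, 0 ≤ Cp θ := fun θ => integral_nonneg fun x => le_max_right _ _
  have hCn_nonneg : ∀ θ, 0 ≤ Cn θ := fun θ => integral_nonneg fun x => le_max_right _ _
  -- main pointwise facts
  have hmain : ∀ᵐ θ ∂w,
      klDiv (P θ) Q = ENNReal.ofReal (A θ) ∧ 0 ≤ A θ ∧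
      klDiv (P θ) M = ENNReal.ofReal (A θ - Cf θ) ∧ 0 ≤ A θ - Cf θ ∧
      Integrable (fun x => max (ℓ x) 0) (P θ) ∧ Integrable (fun x => max (- ℓ x) 0) (P θ) ∧
      Cf θ = Cp θ - Cn θ := by
    filter_upwards [hQae, hPM, hchain, hint, hZae] with θ hθ hPMθ hch hintθ hZθ
    have hch' := hch hPMθ hZθ
    have hAeq : A θ = ∫ x, llr (P θ) Q x ∂(P θ) := integral_congr_ae (hr_ae θ hθ.1)
    have hMint : ∫ x, llr (P θ) M x ∂(P θ) = A θ - Cf θ := by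
      have h1 : llr (P θ) M =ᵐ[P θ] fun x => llr (P θ) Q x - ℓ x := by
        filter_upwards [hch'] with x hx
        rw [hx]; simp [hℓdef]
      rw [integral_congr_ae h1, integral_sub hθ.2 hintθ.2, hAeq, hCfdef]
    refine ⟨?_, ?_, ?_, ?_, hintθ.2.pos_part, hintθ.2.neg.pos_part, ?_⟩
    · rw [klDiv, if_pos ⟨hθ.1, hθ.2⟩, hAeq]
    · rw [hAeq]; exact integral_llr_nonneg' hθ.1 hθ.2
    · rw [klDiv, if_pos ⟨hPMθ, hintθ.1⟩, hMint]
    · rw [← hMint]; exact integral_llr_nonneg' hPMθ hintθ.1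
    · have hpt : ℓ = fun x => max (ℓ x) 0 - max (- ℓ x) 0 := by
        funext x; rw [aux_max_sub]
      rw [hCfdef, hCpdef, hCndef]
      simp only []
      conv_lhs => rw [hpt]
      exact integral_sub hintθ.2.pos_part hintθ.2.neg.pos_part
  -- integrability of A over w
  have hA_nonneg : 0 ≤ᵐ[w] A := hmain.mono fun θ h => h.2.1
  have hRHS : ∫⁻ θ, klDiv (P θ) Q ∂w = ∫⁻ θ, ENNReal.ofReal (A θ) ∂w :=
    lintegral_congr_ae (hmain.mono fun θ h => h.1)
  have hA_int : Integrable A w := by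
    refine ⟨hA_meas.aestronglyMeasurable, ?_⟩
    rw [hasFiniteIntegral_iff_ofReal hA_nonneg]
    rw [← hRHS]
    exact lt_top_iff_ne_top.mpr hRtop
  -- integrability of Cn over w
  have hCn_ae : ∀ᵐ θ ∂w, ENNReal.ofReal (Cn θ) = ∫⁻ x, ENNReal.ofReal (- ℓ x) ∂(P θ) := by
    filter_upwards [hmain] with θ h
    rw [hCndef]
    rw [ofReal_integral_eq_lintegral_ofReal h.2.2.2.2.2.1
      (ae_of_all _ fun x => le_max_right _ _)]
    exact lintegral_congr fun x => aux_ofReal_max_zero _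
  have hCnlint : ∫⁻ θ, ENNReal.ofReal (Cn θ) ∂w = ∫⁻ x, ENNReal.ofReal (- ℓ x) ∂M :=
    (lintegral_congr_ae hCn_ae).trans hbindℓ.symm
  have hCn_int : Integrable Cn w := by
    refine ⟨hCn_meas.aestronglyMeasurable, ?_⟩
    rw [hasFiniteIntegral_iff_ofReal (ae_of_all _ hCn_nonneg), hCnlint]
    exact (hℓnegM.trans_lt ENNReal.ofReal_lt_top)
  -- integrability of Cp over w
  have hCp_ae : ∀ᵐ θ ∂w, ENNReal.ofReal (Cp θ) = ∫⁻ x, ENNReal.ofReal (max (ℓ x) 0) ∂(P θ) := by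
    filter_upwards [hmain] with θ h
    rw [hCpdef]
    exact ofReal_integral_eq_lintegral_ofReal h.2.2.2.2.1
      (ae_of_all _ fun x => le_max_right _ _)
  have hCp_int : Integrable Cp w := by
    refine Integrable.mono' (hA_int.add hCn_int) hCp_meas.aestronglyMeasurable ?_
    filter_upwards [hmain] with θ h
    rw [Real.norm_eq_abs, abs_of_nonneg (hCp_nonneg θ)]
    have h1 : Cp θ = Cf θ + Cn θ := by rw [h.2.2.2.2.2.2]; ring
    have h2 : Cf θ ≤ A θ := by linarith [h.2.2.2.1]
    simp only [Pi.add_apply]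
    linarith [hCn_nonneg θ]
  have hCf_int : Integrable Cf w := by
    refine (hCp_int.sub hCn_int).congr ?_
    filter_upwards [hmain] with θ h
    simp only [Pi.sub_apply]
    exact h.2.2.2.2.2.2.symm
  -- positive part of ℓ over M is finite
  have hbindp : ∫⁻ x, ENNReal.ofReal (max (ℓ x) 0) ∂M
      = ∫⁻ θ, ∫⁻ x, ENNReal.ofReal (max (ℓ x) 0) ∂(P θ) ∂w := by
    rw [hMdef]
    exact Measure.lintegral_bind hPmeas.aemeasurable (hℓmeas.max measurable_const).ennreal_ofReal.aemeasurable
  have hposfin : ∫⁻ x, ENNReal.ofReal (max (ℓ x) 0) ∂M < ⊤ := by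
    rw [hbindp, ← lintegral_congr_ae hCp_ae]
    have := hCp_int.2
    rwa [hasFiniteIntegral_iff_ofReal (ae_of_all _ hCp_nonneg)] at this
  -- ℓ is integrable over M, and Gibbs for M vs Q
  have hℓ_int : Integrable ℓ M := by
    refine ⟨hℓmeas.aestronglyMeasurable, ?_⟩
    rw [hasFiniteIntegral_iff_norm]
    have hpt : ∀ x, ENNReal.ofReal ‖ℓ x‖
        = ENNReal.ofReal (max (ℓ x) 0) + ENNReal.ofReal (max (- ℓ x) 0) := by
      intro x
      rw [← ENNReal.ofReal_add (le_max_right _ _) (le_max_right _ _)]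
      congr 1
      rw [Real.norm_eq_abs]
      rcases le_total (ℓ x) 0 with h | h
      · rw [abs_of_nonpos h, max_eq_right h, max_eq_left (neg_nonneg.mpr h)]; ring
      · rw [abs_of_nonneg h, max_eq_left h, max_eq_right (neg_nonpos.mpr h)]; ring
    rw [lintegral_congr hpt, lintegral_add_left (hℓmeas.max measurable_const).ennreal_ofReal]
    refine ENNReal.add_lt_top.mpr ⟨hposfin, ?_⟩
    have : ∫⁻ x, ENNReal.ofReal (max (- ℓ x) 0) ∂M = ∫⁻ x, ENNReal.ofReal (- ℓ x) ∂M :=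
      lintegral_congr fun x => aux_ofReal_max_zero _
    rw [this]
    exact hℓnegM.trans_lt ENNReal.ofReal_lt_top
  have hGibbsM : 0 ≤ ∫ x, ℓ x ∂M := integral_llr_nonneg' hMQ hℓ_int
  -- average of Cf equals the integral of ℓ over M
  have hIntEq : ∀ (f : Θ → ℝ) (fM : Ω → ℝ), StronglyMeasurable f → Integrable f w →
      (∀ θ, 0 ≤ f θ) → (0 ≤ fM) → Integrable fM M →
      (∫⁻ θ, ENNReal.ofReal (f θ) ∂w = ∫⁻ x, ENNReal.ofReal (fM x) ∂M) →
      ∫ θ, f θ ∂w = ∫ x, fM x ∂M := by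
    intro f fM hf hfint hfnn hfMnn hfMint heq
    have h1 : ENNReal.ofReal (∫ θ, f θ ∂w) = ENNReal.ofReal (∫ x, fM x ∂M) := by
      rw [ofReal_integral_eq_lintegral_ofReal hfint (ae_of_all _ hfnn),
        ofReal_integral_eq_lintegral_ofReal hfMint (ae_of_all _ hfMnn), heq]
    have h2 := congrArg ENNReal.toReal h1
    rwa [ENNReal.toReal_ofReal (integral_nonneg hfnn),
      ENNReal.toReal_ofReal (integral_nonneg hfMnn)] at h2
  have hCpEq : ∫ θ, Cp θ ∂w = ∫ x, max (ℓ x) 0 ∂M := by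
    refine hIntEq Cp (fun x => max (ℓ x) 0) hCp_meas hCp_int hCp_nonneg
      (fun x => le_max_right _ _) hℓ_int.pos_part ?_
    rw [lintegral_congr_ae hCp_ae, hbindp]
  have hCnEq : ∫ θ, Cn θ ∂w = ∫ x, max (- ℓ x) 0 ∂M := by
    refine hIntEq Cn (fun x => max (- ℓ x) 0) hCn_meas hCn_int hCn_nonneg
      (fun x => le_max_right _ _) hℓ_int.neg.pos_part ?_
    rw [hCnlint]
    refine (lintegral_congr fun x => (aux_ofReal_max_zero _).symm)
  have hCfw : ∫ θ, Cf θ ∂w = ∫ x, ℓ x ∂M := by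
    have h1 : ∫ θ, Cf θ ∂w = ∫ θ, Cp θ ∂w - ∫ θ, Cn θ ∂w := by
      rw [← integral_sub hCp_int hCn_int]
      refine integral_congr_ae ?_
      filter_upwards [hmain] with θ h
      rw [h.2.2.2.2.2.2]
    have hnegpart : Integrable (fun x => max (- ℓ x) 0) M := by
      have := hℓ_int.neg.pos_part
      simpa using this
    have h2 : ∫ x, ℓ x ∂M = ∫ x, max (ℓ x) 0 ∂M - ∫ x, max (- ℓ x) 0 ∂M := by
      rw [← integral_sub hℓ_int.pos_part hnegpart]
      exact integral_congr_ae (ae_of_all _ fun x => (aux_max_sub (ℓ x)).symm)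
    rw [h1, h2, hCpEq, hCnEq]
  -- conclusion
  have hAC_int : Integrable (fun θ => A θ - Cf θ) w := hA_int.sub hCf_int
  calc ∫⁻ θ, klDiv (P θ) M ∂w
      = ∫⁻ θ, ENNReal.ofReal (A θ - Cf θ) ∂w :=
        lintegral_congr_ae (hmain.mono fun θ h => h.2.2.1)
    _ = ENNReal.ofReal (∫ θ, (A θ - Cf θ) ∂w) :=
        (ofReal_integral_eq_lintegral_ofReal hAC_int
          (hmain.mono fun θ h => h.2.2.2.1)).symm
    _ ≤ ENNReal.ofReal (∫ θ, A θ ∂w) := by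
        refine ENNReal.ofReal_le_ofReal ?_
        rw [integral_sub hA_int hCf_int]
        have h0 : 0 ≤ ∫ θ, Cf θ ∂w := hCfw ▸ hGibbsM
        linarith
    _ = ∫⁻ θ, ENNReal.ofReal (A θ) ∂w :=
        ofReal_integral_eq_lintegral_ofReal hA_int hA_nonneg
    _ = ∫⁻ θ, klDiv (P θ) Q ∂w := hRHS.symm
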